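/- Let ι be a finite nonempty type, z, v : ι → ℝ, and j ∈ ι. Then, as η → 0, log σ(z + ηv)_j − log σ(z)_j = η·(v_j − Σ_{b ∈ ι} σ(z)_b · v_b) + O(η²); that is, η ↦ log σ(z + ηv)_j − log σ(z)_j − η·(v_j − Σ_{b ∈ ι} σ(z)_b · v_b) is O(η²) as η → 0. -/

import Mathlib

/-!
Since `log σ(z)_j = z_j - log ∑_b exp z_b`, the expression is minus the first-order Taylor
remainder at `0` of the log-sum-exp function along the line `t ↦ z + t • v`. That function is
analytic, so its remainder is `O(t²)`, and its derivative at `0` is `∑_b σ(z)_b v_b`.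
-/

open Finset Filter Asymptotics

noncomputable section

/-- Softmax: `σ(z)_j = exp(z_j) / ∑_b exp(z_b)`. -/
def softmax {ι : Type*} [Fintype ι] (z : ι → ℝ) (j : ι) : ℝ :=
  Real.exp (z j) / ∑ b : ι, Real.exp (z b)

theorem AnalyticAt.isBigO_sub_sub_smul_deriv {𝕜 E : Type*} [NontriviallyNormedField 𝕜]
    [NormedAddCommGroup E] [NormedSpace 𝕜 E] {f : 𝕜 → E} {x : 𝕜} (hf : AnalyticAt 𝕜 f x) :
    (fun h => f (x + h) - f x - h • deriv f x) =O[nhds 0] fun h => h ^ 2 := by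
  obtain ⟨p, hp⟩ := hf
  have hcoeff_zero : p.coeff 0 = f x := hp.coeff_zero _
  have hpartialSum : ∀ h, p.partialSum 2 h = f x + h • deriv f x := fun h => by
    simp [FormalMultilinearSeries.partialSum, Finset.sum_range_succ, hcoeff_zero, hp.deriv]
  simpa only [hpartialSum, ← norm_pow, isBigO_norm_right, sub_add_eq_sub_sub]
    using hp.isBigO_sub_partialSum_pow 2

def logSumExp {ι : Type*} [Fintype ι] (z : ι → ℝ) : ℝ :=
  Real.log (∑ b, Real.exp (z b))

section

variable {ι : Type*} [Fintype ι] [Nonempty ι]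

theorem sum_exp_pos (z : ι → ℝ) : 0 < ∑ b, Real.exp (z b) :=
  Finset.sum_pos (fun b _ => Real.exp_pos (z b)) Finset.univ_nonempty

theorem log_softmax (z : ι → ℝ) (j : ι) : Real.log (softmax z j) = z j - logSumExp z := by
  rw [softmax, Real.log_div (Real.exp_ne_zero _) (sum_exp_pos z).ne', Real.log_exp, logSumExp]

theorem analyticAt_logSumExp (z : ι → ℝ) : AnalyticAt ℝ logSumExp z := by
  have hsum : AnalyticAt ℝ (fun z : ι → ℝ => ∑ b, Real.exp (z b)) z :=
    Finset.analyticAt_fun_sum _ fun b _ =>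
      analyticAt_rexp.comp ((ContinuousLinearMap.proj (R := ℝ) b).analyticAt z)
  exact AnalyticAt.comp (x := z) (analyticAt_log (sum_exp_pos z)) hsum

theorem hasDerivAt_logSumExp_add_smul (z v : ι → ℝ) (t : ℝ) :
    HasDerivAt (fun t : ℝ => logSumExp (z + t • v)) (∑ b, softmax (z + t • v) b * v b) t := by
  have hexp : ∀ b ∈ univ, HasDerivAt (fun t : ℝ => Real.exp (z b + t * v b))
      (Real.exp (z b + t * v b) * v b) t := fun b _ => by
    simpa using (((hasDerivAt_id t).mul_const (v b)).const_add (z b)).exp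
  convert (HasDerivAt.fun_sum hexp).log (sum_exp_pos _).ne' using 1
  · rfl
  · simp [softmax, Finset.sum_div, div_mul_eq_mul_div]

end

/-- First-order log-softmax expansion: as `η → 0`,
`log σ(z + ηv)_j − log σ(z)_j = η·(v_j − ∑_b σ(z)_b·v_b) + O(η²)`. -/
theorem stmt_3 {ι : Type*} [Fintype ι] [Nonempty ι] (z v : ι → ℝ) (j : ι) :
    (fun η : ℝ => Real.log (softmax (z + η • v) j) - Real.log (softmax z j)
        - η * (v j - ∑ b : ι, softmax z b * v b))
      =O[nhds (0 : ℝ)] (fun η : ℝ => η ^ 2) := by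
  set L : ℝ → ℝ := fun t => logSumExp (z + t • v)
  have hL : AnalyticAt ℝ L 0 :=
    AnalyticAt.comp (g := logSumExp) (f := fun t : ℝ => z + t • v) (analyticAt_logSumExp _)
      (analyticAt_const.add (analyticAt_id.smul analyticAt_const))
  have hL' : deriv L 0 = ∑ b, softmax z b * v b := by
    simpa using (hasDerivAt_logSumExp_add_smul z v 0).deriv
  refine hL.isBigO_sub_sub_smul_deriv.neg_left.congr_left fun η => ?_
  simp only [L, hL', log_softmax, zero_add, zero_smul, add_zero, smul_eq_mul, Pi.add_apply,
    Pi.smul_apply]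
  ring
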